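/- Event generation preserves state consistency: if a marketplace state ⟨C, D, B, t, G, i, L, E⟩ is consistent (all contract identifiers occurring in C are pairwise distinct and strictly smaller than the fresh id i) and it steps to a state ⟨C', D', B', t', G', i', L', E'⟩, then the event list E' extends E by appending exactly the event prescribed by the applied rule (IssuedFor for Issue, Executed for Join and Join-Or, Deleted for Fail, and nothing for Tick), and the resulting state remains consistent. -/

import Mathlib

/-- Currencies. -/
inductive Currency
  | USD | EUR
deriving DecidableEq, Repr

/-- Addresses of external data providers. -/
abbrev Address := ℕ

/-- Parties (participants). -/
abbrev Party := ℕ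

/-- Findel primitives. -/
inductive Primitive
  | Zero : Primitive
  | One : Currency → Primitive
  | Scale : ℕ → Primitive → Primitive
  | ScaleObs : Address → Primitive → Primitive
  | Give : Primitive → Primitive
  | And : Primitive → Primitive → Primitive
  | Or : Primitive → Primitive → Primitive
  | If : Address → Primitive → Primitive → Primitive
  | Timebound : ℕ → ℕ → Primitive → Primitive
deriving DecidableEq, Repr

/-- A ledger transaction: sender, receiver, amount, currency. -/
structure Transaction where
  sender : Party
  receiver : Party
  amount : ℕ
  currency : Currency
deriving DecidableEq, Repr

/-- Balances of the parties, per currency. -/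
abbrev Balance := Party → Currency → ℤ

/-- An external gateway: a partial map from addresses to values. -/
abbrev Gateway := Address → Option ℕ

/-- A Findel contract: id, description id, primitive, issuer, owner,
proposed owner, scale factor. -/
structure FindelContract where
  id : ℕ
  dscId : ℕ
  prim : Primitive
  issuer : Party
  owner : Party
  proposedOwner : Party
  scale : ℕ
deriving DecidableEq, Repr

/-- A Findel description: id, primitive and the time window in which
joining/execution is allowed. -/
structure Description where
  id : ℕ
  prim : Primitive
  startT : ℕ
  endT : ℕ
deriving DecidableEq, Repr

/-- Update balances: transfer `s` units of `cur` from `I` to `O`. -/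
def updBal (B : Balance) (I O : Party) (s : ℕ) (cur : Currency) : Balance :=
  fun p c =>
    if c = cur then
      B p c + (if p = O then (s : ℤ) else 0) - (if p = I then (s : ℤ) else 0)
    else B p c

/-- The execution function for Findel primitives.  Arguments: the primitive,
the contract id, the description id, the scale factor, the issuer, the owner,
the current time, the gateway, the current balances, the ledger and a fresh id.
It either fails (`none`) or returns the updated balances, the list of newly
generated contracts, a new fresh id and the updated ledger. -/
def exec : Primitive → ℕ → ℕ → ℕ → Party → Party → ℕ → Gateway → Balance →
    List Transaction → ℕ →
    Option (Balance × List FindelContract × ℕ × List Transaction)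
  | .Zero, _, _, _, _, _, _, _, B, L, i => some (B, [], i, L)
  | .One cur, _, _, s, I, O, _, _, B, L, i =>
      some (updBal B I O s cur, [], i, L ++ [⟨I, O, s, cur⟩])
  | .Scale k c, cid, did, s, I, O, t, G, B, L, i =>
      exec c cid did (k * s) I O t G B L i
  | .ScaleObs a c, cid, did, s, I, O, t, G, B, L, i =>
      match G a with
      | none => none
      | some k => exec c cid did (k * s) I O t G B L i
  | .Give c, cid, did, s, I, O, t, G, B, L, i =>
      exec c cid did s O I t G B L i
  | .And c₁ c₂, cid, did, s, I, O, t, G, B, L, i =>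
      match exec c₁ cid did s I O t G B L i with
      | none => none
      | some (B', Cs₁, i', L') =>
        match exec c₂ cid did s I O t G B' L' i' with
        | none => none
        | some (B'', Cs₂, i'', L'') => some (B'', Cs₁ ++ Cs₂, i'', L'')
  | .Or c₁ c₂, _, did, s, I, O, _, _, B, L, i =>
      some (B, [⟨i, did, .Or c₁ c₂, I, O, O, s⟩], i + 1, L)
  | .If a c₁ c₂, cid, did, s, I, O, t, G, B, L, i =>
      match G a with
      | none => none
      | some v =>
        if v ≠ 0 then exec c₁ cid did s I O t G B L i
        else exec c₂ cid did s I O t G B L i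
  | .Timebound t₀ t₁ c, cid, did, s, I, O, t, G, B, L, i =>
      if t₀ ≤ t ∧ t ≤ t₁ then exec c cid did s I O t G B L i
      else if t < t₀ then
        some (B, [⟨i, did, .Timebound t₀ t₁ c, I, O, O, s⟩], i + 1, L)
      else none

/-- Events triggered during the execution. -/
inductive Event
  | IssuedFor : Party → ℕ → Event
  | Executed : ℕ → Event
  | Deleted : ℕ → Event
deriving DecidableEq, Repr

/-- The marketplace state ⟨C, D, B, t, G, i, L, E⟩. -/
structure State where
  contracts : List FindelContract
  descriptions : List Description
  balance : Balance
  time : ℕ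
  gateway : Gateway
  freshId : ℕ
  ledger : List Transaction
  events : List Event

/-- Labels for the rules of the marketplace step relation. -/
inductive Rule
  | issue | join | joinOr | fail | tick
deriving DecidableEq, Repr

/-- The marketplace step relation, labeled by the applied rule. -/
inductive Step : Rule → State → State → Prop
  | issue (S : State) (dsc : Description) (I pO : Party) (s : ℕ)
      (hdsc : dsc ∈ S.descriptions) :
      Step .issue S
        { S with
          contracts := ⟨S.freshId, dsc.id, dsc.prim, I, I, pO, s⟩ :: S.contracts,
          freshId := S.freshId + 1,
          events := .IssuedFor pO S.freshId :: S.events }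
  | join (S : State) (c : FindelContract) (dsc : Description)
      (B' : Balance) (Cs : List FindelContract) (i' : ℕ) (L' : List Transaction)
      (hc : c ∈ S.contracts)
      (hunjoined : c.owner = c.issuer)
      (hdsc : dsc ∈ S.descriptions) (hdid : dsc.id = c.dscId)
      (hnotOr : ∀ c₁ c₂, c.prim ≠ .Or c₁ c₂)
      (htime : dsc.startT ≤ S.time ∧ S.time ≤ dsc.endT)
      (hexec : exec c.prim c.id c.dscId c.scale c.issuer c.proposedOwner
        S.time S.gateway S.balance S.ledger S.freshId = some (B', Cs, i', L')) :
      Step .join S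
        { S with
          contracts := Cs ++ S.contracts.erase c,
          balance := B', freshId := i', ledger := L',
          events := .Executed c.id :: S.events }
  | joinOr (S : State) (c : FindelContract) (dsc : Description)
      (c₁ c₂ d : Primitive)
      (B' : Balance) (Cs : List FindelContract) (i' : ℕ) (L' : List Transaction)
      (hc : c ∈ S.contracts)
      (hunjoined : c.owner = c.issuer)
      (hdsc : dsc ∈ S.descriptions) (hdid : dsc.id = c.dscId)
      (hOr : c.prim = .Or c₁ c₂)
      (hchoice : d = c₁ ∨ d = c₂)
      (htime : dsc.startT ≤ S.time ∧ S.time ≤ dsc.endT)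
      (hexec : exec d c.id c.dscId c.scale c.issuer c.proposedOwner
        S.time S.gateway S.balance S.ledger S.freshId = some (B', Cs, i', L')) :
      Step .joinOr S
        { S with
          contracts := Cs ++ S.contracts.erase c,
          balance := B', freshId := i', ledger := L',
          events := .Executed c.id :: S.events }
  | fail (S : State) (c : FindelContract) (dsc : Description)
      (hc : c ∈ S.contracts)
      (hunjoined : c.owner = c.issuer)
      (hdsc : dsc ∈ S.descriptions) (hdid : dsc.id = c.dscId)
      (hnotOr : ∀ c₁ c₂, c.prim ≠ .Or c₁ c₂)
      (htime : dsc.startT ≤ S.time ∧ S.time ≤ dsc.endT)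
      (hexec : exec c.prim c.id c.dscId c.scale c.issuer c.proposedOwner
        S.time S.gateway S.balance S.ledger S.freshId = none) :
      Step .fail S
        { S with
          contracts := S.contracts.erase c,
          events := .Deleted c.id :: S.events }
  | tick (S : State) :
      Step .tick S { S with time := S.time + 1 }

/-- A marketplace state is consistent when all contract identifiers are
pairwise distinct and strictly smaller than the fresh id. -/
def consistent (S : State) : Prop :=
  S.contracts.Pairwise (fun c c' => c.id ≠ c'.id) ∧
  ∀ c ∈ S.contracts, c.id < S.freshId

lemma exec_spec :
    ∀ (p : Primitive) (cid did s : ℕ) (I O : Party) (t : ℕ) (G : Gateway)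
      (B : Balance) (L : List Transaction) (i : ℕ)
      (B' : Balance) (Cs : List FindelContract) (i' : ℕ) (L' : List Transaction),
      exec p cid did s I O t G B L i = some (B', Cs, i', L') →
      i ≤ i' ∧ (∀ c ∈ Cs, i ≤ c.id ∧ c.id < i') ∧
        Cs.Pairwise (fun a b => a.id ≠ b.id) := by
  intro p
  induction p with
  | Zero =>
      intro cid did s I O t G B L i B' Cs i' L' h
      simp [exec] at h
      obtain ⟨_, h1, h2, _⟩ := h
      subst h1 h2; simp
  | One cur =>
      intro cid did s I O t G B L i B' Cs i' L' h
      simp [exec] at h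
      obtain ⟨_, h1, h2, _⟩ := h
      subst h1 h2; simp
  | Scale k c ih =>
      intro cid did s I O t G B L i B' Cs i' L' h
      exact ih _ _ _ _ _ _ _ _ _ _ _ _ _ _ h
  | ScaleObs a c ih =>
      intro cid did s I O t G B L i B' Cs i' L' h
      simp only [exec] at h
      cases hga : G a with
      | none => rw [hga] at h; simp at h
      | some k => rw [hga] at h; exact ih _ _ _ _ _ _ _ _ _ _ _ _ _ _ h
  | Give c ih =>
      intro cid did s I O t G B L i B' Cs i' L' h
      exact ih _ _ _ _ _ _ _ _ _ _ _ _ _ _ h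
  | And c₁ c₂ ih₁ ih₂ =>
      intro cid did s I O t G B L i B' Cs i' L' h
      simp only [exec] at h
      cases h1 : exec c₁ cid did s I O t G B L i with
      | none => rw [h1] at h; simp at h
      | some r₁ =>
        obtain ⟨B₁, Cs₁, i₁, L₁⟩ := r₁
        rw [h1] at h
        simp only [] at h
        cases h2 : exec c₂ cid did s I O t G B₁ L₁ i₁ with
        | none => rw [h2] at h; simp at h
        | some r₂ =>
          obtain ⟨B₂, Cs₂, i₂, L₂⟩ := r₂
          rw [h2] at h
          simp at h
          obtain ⟨_, hCs, hi, hL⟩ := h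
          subst hCs hi
          obtain ⟨hle₁, hmem₁, hpw₁⟩ := ih₁ _ _ _ _ _ _ _ _ _ _ _ _ _ _ h1
          obtain ⟨hle₂, hmem₂, hpw₂⟩ := ih₂ _ _ _ _ _ _ _ _ _ _ _ _ _ _ h2
          refine ⟨le_trans hle₁ hle₂, ?_, ?_⟩
          · intro c hc
            rcases List.mem_append.mp hc with hc | hc
            · exact ⟨(hmem₁ c hc).1, lt_of_lt_of_le (hmem₁ c hc).2 hle₂⟩
            · exact ⟨le_trans hle₁ (hmem₂ c hc).1, (hmem₂ c hc).2⟩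
          · rw [List.pairwise_append]
            refine ⟨hpw₁, hpw₂, ?_⟩
            intro a ha b hb
            exact ne_of_lt (lt_of_lt_of_le (hmem₁ a ha).2 (hmem₂ b hb).1)
  | Or c₁ c₂ ih₁ ih₂ =>
      intro cid did s I O t G B L i B' Cs i' L' h
      simp [exec] at h
      obtain ⟨_, hCs, hi, _⟩ := h
      subst hCs hi
      refine ⟨Nat.le_succ i, ?_, by simp⟩
      intro c hc; simp at hc; subst hc; simp
  | If a c₁ c₂ ih₁ ih₂ =>
      intro cid did s I O t G B L i B' Cs i' L' h
      simp only [exec] at h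
      cases hga : G a with
      | none => rw [hga] at h; simp at h
      | some v =>
        rw [hga] at h
        simp only [] at h
        by_cases hv : v ≠ 0
        · rw [if_pos hv] at h; exact ih₁ _ _ _ _ _ _ _ _ _ _ _ _ _ _ h
        · rw [if_neg hv] at h; exact ih₂ _ _ _ _ _ _ _ _ _ _ _ _ _ _ h
  | Timebound t₀ t₁ c ih =>
      intro cid did s I O t G B L i B' Cs i' L' h
      simp only [exec] at h
      by_cases ht : t₀ ≤ t ∧ t ≤ t₁
      · rw [if_pos ht] at h; exact ih _ _ _ _ _ _ _ _ _ _ _ _ _ _ h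
      · rw [if_neg ht] at h
        by_cases ht' : t < t₀
        · rw [if_pos ht'] at h
          simp at h
          obtain ⟨_, hCs, hi, _⟩ := h
          subst hCs hi
          refine ⟨Nat.le_succ i, ?_, by simp⟩
          intro c hc; simp at hc; subst hc; simp
        · rw [if_neg ht'] at h; simp at h

lemma join_consistent (S : State) (c : FindelContract)
    (Cs : List FindelContract) (i' : ℕ)
    (hcons : consistent S)
    (hle : S.freshId ≤ i')
    (hmem : ∀ c' ∈ Cs, S.freshId ≤ c'.id ∧ c'.id < i')
    (hpw : Cs.Pairwise (fun a b => a.id ≠ b.id)) :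
    (Cs ++ S.contracts.erase c).Pairwise (fun a b => a.id ≠ b.id) ∧
    ∀ c' ∈ Cs ++ S.contracts.erase c, c'.id < i' := by
  obtain ⟨hpw₀, hbd₀⟩ := hcons
  have hsub : (S.contracts.erase c).Sublist S.contracts := List.erase_sublist
  constructor
  · rw [List.pairwise_append]
    refine ⟨hpw, hpw₀.sublist hsub, ?_⟩
    intro a ha b hb
    have hb' : b.id < S.freshId := hbd₀ b (hsub.mem hb)
    exact (ne_of_lt (lt_of_lt_of_le hb' (hmem a ha).1)).symm
  · intro c' hc'
    rcases List.mem_append.mp hc' with hc' | hc'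
    · exact (hmem c' hc').2
    · exact lt_of_lt_of_le (hbd₀ c' (hsub.mem hc')) hle

/-- event generation preserves state consistency: on a step from
a consistent state, the event list is extended by exactly the event prescribed
by the applied rule (IssuedFor for Issue, Executed for Join and Join-Or,
Deleted for Fail, nothing for Tick), and the resulting state is consistent. -/
theorem step_events_and_consistency
    (r : Rule) (S S' : State) (h : Step r S S') (hcons : consistent S) :
    (match r with
      | .issue => ∃ pO cid, S'.events = Event.IssuedFor pO cid :: S.events
      | .join => ∃ cid, S'.events = Event.Executed cid :: S.events
      | .joinOr => ∃ cid, S'.events = Event.Executed cid :: S.events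
      | .fail => ∃ cid, S'.events = Event.Deleted cid :: S.events
      | .tick => S'.events = S.events) ∧
    consistent S' := by
  obtain ⟨hpw₀, hbd₀⟩ := hcons
  cases h with
  | issue S dsc I pO s hdsc =>
      refine ⟨⟨pO, S.freshId, rfl⟩, ?_, ?_⟩
      · refine List.pairwise_cons.mpr ⟨?_, hpw₀⟩
        intro c' hc'
        exact ne_of_gt (hbd₀ c' hc')
      · intro c hc
        rcases List.mem_cons.mp hc with hc | hc
        · subst hc; simp
        · exact lt_trans (hbd₀ c hc) (Nat.lt_succ_self _)
  | join S c dsc B' Cs i' L' hc hu hdsc hdid hnotOr htime hexec =>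
      obtain ⟨hle, hmem, hpw⟩ := exec_spec _ _ _ _ _ _ _ _ _ _ _ _ _ _ _ hexec
      exact ⟨⟨c.id, rfl⟩, join_consistent S c Cs i' ⟨hpw₀, hbd₀⟩ hle hmem hpw⟩
  | joinOr S c dsc c₁ c₂ d B' Cs i' L' hc hu hdsc hdid hOr hch htime hexec =>
      obtain ⟨hle, hmem, hpw⟩ := exec_spec _ _ _ _ _ _ _ _ _ _ _ _ _ _ _ hexec
      exact ⟨⟨c.id, rfl⟩, join_consistent S c Cs i' ⟨hpw₀, hbd₀⟩ hle hmem hpw⟩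
  | fail S c dsc hc hu hdsc hdid hnotOr htime hexec =>
      have hsub : (S.contracts.erase c).Sublist S.contracts := List.erase_sublist
      exact ⟨⟨c.id, rfl⟩, hpw₀.sublist hsub, fun c' hc' => hbd₀ c' (hsub.mem hc')⟩
  | tick S =>
      exact ⟨rfl, hpw₀, hbd₀⟩
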